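/- arXiv:2511.21835 — 6 statements merged into one kernel-verified Lean document; each statement's English description precedes it below -/
import Mathlib

section
/- Let (E,‖·‖) be an ultrametric normed vector space over a non-Archimedean field k whose residue field is k̃. If e_1,…,e_n ∈ E all have norm 1, then {e_1,…,e_n} is orthonormal (i.e. ‖Σ a_i e_i‖ = max_i |a_i| for all scalars a_i) if and only if the residue classes ẽ_1,…,ẽ_n are linearly independent over k̃. -/
private lemma norm_sum_le_of_nonarch {E : Type*} [SeminormedAddCommGroup E]
    (hE : IsNonarchimedean (norm : E → ℝ)) {ι : Type*} (s : Finset ι) (f : ι → E)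
    {M : ℝ} (hM : 0 ≤ M) (h : ∀ i ∈ s, ‖f i‖ ≤ M) : ‖∑ i ∈ s, f i‖ ≤ M := by
  classical
  induction s using Finset.induction_on with
  | empty => simpa using hM
  | @insert x t hx ih =>
    rw [Finset.sum_insert hx]
    exact (hE _ _).trans (max_le (h x (Finset.mem_insert_self x t))
      (ih fun i hi => h i (Finset.mem_insert_of_mem hi)))

/-- Let `(E, ‖·‖)` be an ultrametric normed vector space over a non-Archimedean field `k`,
and `e_1, …, e_n ∈ E` vectors of norm `1`.  Then `{e_i}` is orthonormal, i.e.
`‖∑ a_i • e_i‖ = max_i ‖a_i‖` for all scalars, if and only if the residue classes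
`ẽ_1, …, ẽ_n` in `Ẽ = E°/E°°` are linearly independent over the residue field `k̃`.

(The right hand side below is the unfolding of linear independence of the residue
classes: a `k̃`-linear combination is represented by coefficients `a_i ∈ k°`, i.e.
`‖a_i‖ ≤ 1`; it vanishes in `Ẽ` iff `‖∑ a_i • e_i‖ < 1`, and the class of `a_i`
vanishes in `k̃` iff `‖a_i‖ < 1`.) -/
theorem stmt1 {k E : Type*} [NontriviallyNormedField k]
    [SeminormedAddCommGroup E] [NormedSpace k E]
    (hk : IsNonarchimedean (norm : k → ℝ)) (hE : IsNonarchimedean (norm : E → ℝ))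
    {n : ℕ} (e : Fin n → E) (he : ∀ i, ‖e i‖ = 1) :
    (∀ a : Fin n → k, ‖∑ i, a i • e i‖ = ⨆ i, ‖a i‖) ↔
      (∀ a : Fin n → k, (∀ i, ‖a i‖ ≤ 1) → ‖∑ i, a i • e i‖ < 1 → ∀ i, ‖a i‖ < 1) := by
  constructor
  · intro h a _ hsum i
    rw [h a] at hsum
    exact lt_of_le_of_lt (le_ciSup (f := fun i => ‖a i‖) (Set.Finite.bddAbove (Set.finite_range _)) i) hsum
  · intro h a
    rcases Nat.eq_zero_or_pos n with hn | hn
    · subst hn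
      simp [Real.iSup_of_isEmpty]
    · have : Nonempty (Fin n) := ⟨⟨0, hn⟩⟩
      obtain ⟨j, hj⟩ := Finite.exists_max (fun i => ‖a i‖)
      have hsup : (⨆ i, ‖a i‖) = ‖a j‖ :=
        le_antisymm (ciSup_le hj) (le_ciSup (f := fun i => ‖a i‖) (Set.Finite.bddAbove (Set.finite_range _)) j)
      rw [hsup]
      by_cases hz : a j = 0
      · have hall : ∀ i, a i = 0 := fun i =>
          norm_le_zero_iff.mp (by simpa [hz] using hj i)
        simp [hall, hz]
      · have hajpos : 0 < ‖a j‖ := norm_pos_iff.mpr hz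
        have hle : ‖∑ i, a i • e i‖ ≤ ‖a j‖ :=
          norm_sum_le_of_nonarch hE _ _ hajpos.le
            (fun i _ => by rw [norm_smul, he i, mul_one]; exact hj i)
        refine le_antisymm hle (le_of_not_gt fun hlt => ?_)
        set b : Fin n → k := fun i => (a j)⁻¹ * a i with hb
        have hb1 : ∀ i, ‖b i‖ ≤ 1 := fun i => by
          rw [hb, norm_mul, norm_inv]
          calc ‖a j‖⁻¹ * ‖a i‖ ≤ ‖a j‖⁻¹ * ‖a j‖ := by
                exact mul_le_mul_of_nonneg_left (hj i) (inv_nonneg.mpr hajpos.le)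
            _ = 1 := inv_mul_cancel₀ (ne_of_gt hajpos)
        have hsum : (∑ i, b i • e i) = (a j)⁻¹ • ∑ i, a i • e i := by
          rw [Finset.smul_sum]
          exact Finset.sum_congr rfl fun i _ => by rw [hb, smul_smul]
        have hlt1 : ‖∑ i, b i • e i‖ < 1 := by
          rw [hsum, norm_smul, norm_inv]
          calc ‖a j‖⁻¹ * ‖∑ i, a i • e i‖ < ‖a j‖⁻¹ * ‖a j‖ := by
                exact mul_lt_mul_of_pos_left hlt (inv_pos.mpr hajpos)
            _ = 1 := inv_mul_cancel₀ (ne_of_gt hajpos)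
        have := h b hb1 hlt1 j
        rw [hb] at this
        simp [norm_mul, norm_inv, inv_mul_cancel₀ (ne_of_gt hajpos)] at this
end

section
/- Let B be a uniform Banach algebra with Berkovich spectrum M(B) and reduction map red : M(B) → Spec(B̃). If f, g ∈ B have spectral norm 1 and neither of the residue classes f̃, g̃ lies in a fixed minimal prime p of B̃, then P(|f|) ∩ P(|g|) is nonempty, where P(|h|) = {z : |h(z)|=1}. -/
/-- A point of the Berkovich spectrum `M(B)` of a (commutative) normed ring `B`:
a bounded multiplicative (non-Archimedean) seminorm on `B`. -/
structure BerkovichPoint (B : Type*) [NormedCommRing B] where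
  toFun : B → ℝ
  nonneg' : ∀ b, 0 ≤ toFun b
  map_zero' : toFun 0 = 0
  map_one' : toFun 1 = 1
  map_mul' : ∀ a b, toFun (a * b) = toFun a * toFun b
  add_le' : ∀ a b, toFun (a + b) ≤ max (toFun a) (toFun b)
  bounded' : ∀ b, toFun b ≤ ‖b‖

/-- The Gelfand–Berkovich topology on the spectrum: the topology of pointwise
convergence. -/
instance (B : Type*) [NormedCommRing B] : TopologicalSpace (BerkovichPoint B) :=
  TopologicalSpace.induced (fun z => z.toFun) inferInstance

/-- A normed ring is uniform (spectrally normed) if its norm is the sup of the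
absolute values at the points of its Berkovich spectrum. -/
def IsUniform (B : Type*) [NormedCommRing B] : Prop :=
  ∀ b : B, IsLUB (Set.range fun z : BerkovichPoint B => z.toFun b) ‖b‖

/-- A boundary of a uniform Banach algebra: a subset of the spectrum on which every
element attains (as a sup) its spectral norm. -/
def IsBoundary (B : Type*) [NormedCommRing B] (Γ : Set (BerkovichPoint B)) : Prop :=
  ∀ b : B, IsLUB ((fun z : BerkovichPoint B => z.toFun b) '' Γ) ‖b‖

/-- A Shilov boundary: a closed boundary minimal among closed boundaries. -/
def IsShilov (B : Type*) [NormedCommRing B] (Γ : Set (BerkovichPoint B)) : Prop :=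
  IsClosed Γ ∧ IsBoundary B Γ ∧
    ∀ Γ' : Set (BerkovichPoint B), IsClosed Γ' → IsBoundary B Γ' → Γ' ⊆ Γ → Γ' = Γ

/-- The closed unit ball `B° = {b : ‖b‖ ≤ 1}` of a non-Archimedean normed ring. -/
def unitBall (B : Type*) [NormedCommRing B] [NormOneClass B]
    (hna : IsNonarchimedean (norm : B → ℝ)) : Subring B where
  carrier := {b | ‖b‖ ≤ 1}
  one_mem' := by simp
  zero_mem' := by simp
  mul_mem' := by
    intro a b ha hb
    refine le_trans (norm_mul_le a b) ?_
    calc ‖a‖ * ‖b‖ ≤ 1 * 1 := by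
          exact mul_le_mul ha hb (norm_nonneg b) zero_le_one
      _ = 1 := by ring
  add_mem' := by
    intro a b ha hb
    exact le_trans (hna a b) (max_le ha hb)
  neg_mem' := by
    intro a ha
    simpa using ha

/-- The open unit ball `B°° = {b : ‖b‖ < 1}` as an ideal of `B°`. -/
def openIdeal (B : Type*) [NormedCommRing B] [NormOneClass B]
    (hna : IsNonarchimedean (norm : B → ℝ)) : Ideal (unitBall B hna) where
  carrier := {b | ‖(b : B)‖ < 1}
  zero_mem' := by simp
  add_mem' := by
    intro a b ha hb
    have : ‖((a + b : unitBall B hna) : B)‖ ≤ max ‖(a : B)‖ ‖(b : B)‖ := hna _ _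
    exact lt_of_le_of_lt this (max_lt ha hb)
  smul_mem' := by
    intro c a ha
    have h1 : ‖((c • a : unitBall B hna) : B)‖ ≤ ‖(c : B)‖ * ‖(a : B)‖ := by
      simpa using norm_mul_le (c : B) (a : B)
    have hc : ‖(c : B)‖ ≤ 1 := c.2
    have ha' : ‖(a : B)‖ < 1 := ha
    have : ‖(c : B)‖ * ‖(a : B)‖ < 1 := by
      have := norm_nonneg (a : B)
      nlinarith [ha'.le]
    exact lt_of_le_of_lt h1 this

/-- The reduction ring `B̃ = B°/B°°`. -/
abbrev Reduction (B : Type*) [NormedCommRing B] [NormOneClass B]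
    (hna : IsNonarchimedean (norm : B → ℝ)) : Type _ :=
  (unitBall B hna) ⧸ (openIdeal B hna)

/-- The reduction map `B° → B̃`. -/
def reduce (B : Type*) [NormedCommRing B] [NormOneClass B]
    (hna : IsNonarchimedean (norm : B → ℝ)) :
    unitBall B hna →+* Reduction B hna :=
  Ideal.Quotient.mk (openIdeal B hna)

/-- The ideal `{b ∈ B° : |b(z)| < 1}` of `B°` attached to a point `z` of the spectrum. -/
def pointIdeal (B : Type*) [NormedCommRing B] [NormOneClass B]
    (hna : IsNonarchimedean (norm : B → ℝ)) (z : BerkovichPoint B) :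
    Ideal (unitBall B hna) where
  carrier := {b | z.toFun (b : B) < 1}
  zero_mem' := by
    show z.toFun ((0 : unitBall B hna) : B) < 1
    simp only [ZeroMemClass.coe_zero]
    rw [z.map_zero']; norm_num
  add_mem' := by
    intro a b ha hb
    have : z.toFun ((a : B) + (b : B)) ≤ max (z.toFun (a : B)) (z.toFun (b : B)) :=
      z.add_le' _ _
    have h2 : ((a + b : unitBall B hna) : B) = (a : B) + (b : B) := rfl
    rw [Set.mem_setOf_eq, h2]
    exact lt_of_le_of_lt this (max_lt ha hb)
  smul_mem' := by
    intro c a ha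
    have h2 : ((c • a : unitBall B hna) : B) = (c : B) * (a : B) := rfl
    rw [Set.mem_setOf_eq, h2, z.map_mul']
    have hc : z.toFun (c : B) ≤ 1 := le_trans (z.bounded' _) c.2
    have hc0 : 0 ≤ z.toFun (c : B) := z.nonneg' _
    have ha' : z.toFun (a : B) < 1 := ha
    nlinarith [ha'.le, z.nonneg' (a : B)]

/-- The reduction `red(z)` of a point of the spectrum: the prime ideal
`{b̃ : |b(z)| < 1}` of the reduction ring `B̃`. -/
def redIdeal (B : Type*) [NormedCommRing B] [NormOneClass B]
    (hna : IsNonarchimedean (norm : B → ℝ)) (z : BerkovichPoint B) :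
    Ideal (Reduction B hna) :=
  (pointIdeal B hna z).map (Ideal.Quotient.mk (openIdeal B hna))

/-- Let `B` be a uniform Banach algebra, `p` a minimal prime of the reduction ring `B̃`,
and `f, g ∈ B°` of spectral norm `1` whose residue classes do not lie in `p`.
Then `P(|f|) ∩ P(|g|)` is nonempty. -/
theorem stmt8 {B : Type*} [NormedCommRing B] [NormOneClass B] [CompleteSpace B]
    [CompactSpace (BerkovichPoint B)]
    (hna : IsNonarchimedean (norm : B → ℝ)) (hU : IsUniform B)
    (p : Ideal (Reduction B hna)) (hp : p.IsPrime)
    (hmin : p ∈ minimalPrimes (Reduction B hna))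
    (f g : unitBall B hna) (hf : ‖(f : B)‖ = 1) (hg : ‖(g : B)‖ = 1)
    (hfp : reduce B hna f ∉ p) (hgp : reduce B hna g ∉ p) :
    ∃ z : BerkovichPoint B, z.toFun (f : B) = 1 ∧ z.toFun (g : B) = 1 := by
  -- the reduction of f*g is nonzero, hence ‖(f*g : B)‖ = 1
  have hfg_ne : reduce B hna (f * g) ∉ p := by
    rw [map_mul]
    exact fun h => (hp.mul_mem_iff_mem_or_mem.mp h).elim hfp hgp
  have hfg_norm_le : ‖((f * g : unitBall B hna) : B)‖ ≤ 1 := (f * g).2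
  have hfg_norm : ‖((f * g : unitBall B hna) : B)‖ = 1 := by
    rcases lt_or_eq_of_le hfg_norm_le with h | h
    · exfalso
      have hmem : (f * g : unitBall B hna) ∈ openIdeal B hna := h
      have : reduce B hna (f * g) = 0 := (Ideal.Quotient.eq_zero_iff_mem).mpr hmem
      exact hfg_ne (this ▸ p.zero_mem)
    · exact h
  -- the spectrum is nonempty
  haveI hne : Nonempty (BerkovichPoint B) := by
    by_contra h
    have := hU 1
    rw [norm_one] at this
    have hr : (Set.range fun z : BerkovichPoint B => z.toFun 1) = ∅ := by
      simp [Set.range_eq_empty_iff, not_nonempty_iff.mp h]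
    rw [hr] at this
    have h0 : (1 : ℝ) ≤ 0 :=
      this.2 (fun x hx => absurd hx (Set.notMem_empty x))
    linarith
  -- continuity of evaluation
  have hcont : Continuous fun z : BerkovichPoint B =>
      z.toFun ((f * g : unitBall B hna) : B) :=
    (continuous_apply _).comp continuous_induced_dom
  -- attain the sup by compactness
  obtain ⟨z, -, hz⟩ := isCompact_univ.exists_isMaxOn Set.univ_nonempty hcont.continuousOn
  have hub : ∀ y ∈ Set.range fun w : BerkovichPoint B =>
      w.toFun ((f * g : unitBall B hna) : B),
      y ≤ z.toFun ((f * g : unitBall B hna) : B) := by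
    rintro y ⟨w, rfl⟩
    exact hz (Set.mem_univ w)
  have hlub := hU ((f * g : unitBall B hna) : B)
  rw [hfg_norm] at hlub
  have h1le : (1 : ℝ) ≤ z.toFun ((f * g : unitBall B hna) : B) := hlub.2 hub
  have hle1 : z.toFun ((f * g : unitBall B hna) : B) ≤ 1 :=
    le_trans (z.bounded' _) hfg_norm_le
  have heq : z.toFun ((f * g : unitBall B hna) : B) = 1 := le_antisymm hle1 h1le
  have hmul : ((f * g : unitBall B hna) : B) = (f : B) * (g : B) := rfl
  rw [hmul, z.map_mul'] at heq
  have hfle : z.toFun (f : B) ≤ 1 := le_trans (z.bounded' _) hf.le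
  have hgle : z.toFun (g : B) ≤ 1 := le_trans (z.bounded' _) hg.le
  have hf0 : 0 ≤ z.toFun (f : B) := z.nonneg' _
  have hg0 : 0 ≤ z.toFun (g : B) := z.nonneg' _
  exact ⟨z, by nlinarith, by nlinarith⟩
end

section
/- Let B be a uniform Banach algebra and p a minimal prime of the reduction ring B̃. Then red^{-1}(p) = ⋂_{f̃∉p} P(|f|) is a nonempty closed subset of M(B); in particular the image of the reduction map contains every minimal prime (generic point of an irreducible component) of Spec B̃. -/
section Aux

variable {B : Type*} [NormedCommRing B] [NormOneClass B]

lemma BerkovichPoint.toFun_le_one (hna : IsNonarchimedean (norm : B → ℝ))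
    (z : BerkovichPoint B) (f : unitBall B hna) : z.toFun (f : B) ≤ 1 :=
  le_trans (z.bounded' _) f.2

lemma openIdeal_le_pointIdeal (hna : IsNonarchimedean (norm : B → ℝ))
    (z : BerkovichPoint B) : openIdeal B hna ≤ pointIdeal B hna z := by
  intro b hb
  exact lt_of_le_of_lt (z.bounded' _) hb

lemma mem_redIdeal_iff (hna : IsNonarchimedean (norm : B → ℝ))
    (z : BerkovichPoint B) (f : unitBall B hna) :
    reduce B hna f ∈ redIdeal B hna z ↔ z.toFun (f : B) < 1 := by
  constructor
  · intro h
    obtain ⟨g, hg, hgf⟩ := (Ideal.mem_map_iff_of_surjective _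
      Ideal.Quotient.mk_surjective).mp h
    have hsub : g - f ∈ openIdeal B hna := Ideal.Quotient.eq.mp hgf
    have : f = g - (g - f) := by ring
    rw [this]
    exact (pointIdeal B hna z).sub_mem hg (openIdeal_le_pointIdeal hna z hsub)
  · intro h
    exact Ideal.mem_map_of_mem _ h

lemma pointIdeal_isPrime (hna : IsNonarchimedean (norm : B → ℝ))
    (z : BerkovichPoint B) : (pointIdeal B hna z).IsPrime := by
  constructor
  · intro h
    have h1 : (1 : unitBall B hna) ∈ pointIdeal B hna z := h ▸ Submodule.mem_top
    have : z.toFun ((1 : unitBall B hna) : B) < 1 := h1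
    rw [show ((1 : unitBall B hna) : B) = 1 from rfl, z.map_one'] at this
    exact lt_irrefl _ this
  · intro a b hab
    have hab' : z.toFun (a : B) * z.toFun (b : B) < 1 := by
      have : z.toFun ((a * b : unitBall B hna) : B) < 1 := hab
      rwa [show ((a * b : unitBall B hna) : B) = (a : B) * (b : B) from rfl,
        z.map_mul'] at this
    by_contra hcon
    push_neg at hcon
    obtain ⟨ha, hb⟩ := hcon
    have ha' : (1 : ℝ) ≤ z.toFun (a : B) := not_lt.mp ha
    have hb' : (1 : ℝ) ≤ z.toFun (b : B) := not_lt.mp hb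
    nlinarith

set_option synthInstance.maxHeartbeats 1000000 in
lemma redIdeal_isPrime (hna : IsNonarchimedean (norm : B → ℝ))
    (z : BerkovichPoint B) : (redIdeal B hna z).IsPrime := by
  haveI := pointIdeal_isPrime hna z
  exact Ideal.map_isPrime_of_surjective Ideal.Quotient.mk_surjective
    (by rw [Ideal.mk_ker]; exact openIdeal_le_pointIdeal hna z)

lemma continuous_berkovich_eval (f : B) :
    Continuous fun z : BerkovichPoint B => z.toFun f := by
  have h1 : Continuous fun z : BerkovichPoint B => z.toFun := continuous_induced_dom
  exact (continuous_apply f).comp h1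

/-- `z.toFun` restricted to the unit ball as a monoid hom. -/
def BerkovichPoint.ballMonoidHom (hna : IsNonarchimedean (norm : B → ℝ))
    (z : BerkovichPoint B) : unitBall B hna →* ℝ where
  toFun f := z.toFun (f : B)
  map_one' := by simp only [OneMemClass.coe_one, z.map_one']
  map_mul' a b := by simp only [MulMemClass.coe_mul, z.map_mul']

lemma prod_eq_one_forall {ι : Type*} (t : Finset ι) (a : ι → ℝ)
    (h0 : ∀ i ∈ t, 0 ≤ a i) (h1 : ∀ i ∈ t, a i ≤ 1)
    (hprod : ∏ i ∈ t, a i = 1) : ∀ i ∈ t, a i = 1 := by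
  classical
  intro i hi
  have herase : a i * ∏ j ∈ t.erase i, a j = 1 := by
    rw [Finset.mul_prod_erase t a hi, hprod]
  have hle : ∏ j ∈ t.erase i, a j ≤ 1 :=
    Finset.prod_le_one (fun j hj => h0 j (Finset.mem_of_mem_erase hj))
      (fun j hj => h1 j (Finset.mem_of_mem_erase hj))
  nlinarith [h0 i hi, h1 i hi]

/-- Each set `P(|f|)` with `f̃ ∉ p` (in particular `‖f‖ = 1`) is nonempty. -/
lemma exists_toFun_eq_one [CompactSpace (BerkovichPoint B)]
    (hna : IsNonarchimedean (norm : B → ℝ)) (hU : IsUniform B)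
    (f : unitBall B hna) (hf : (f : unitBall B hna) ∉ openIdeal B hna) :
    ∃ z : BerkovichPoint B, z.toFun (f : B) = 1 := by
  have hnorm : ‖(f : B)‖ = 1 := le_antisymm f.2 (not_lt.mp hf)
  have hne : Nonempty (BerkovichPoint B) := by
    by_contra h
    have hlub := hU 1
    rw [Set.range_eq_empty_iff.mpr (not_nonempty_iff.mp h)] at hlub
    have h0 : (0 : ℝ) ∈ upperBounds (∅ : Set ℝ) := by simp
    have := hlub.2 h0
    rw [norm_one] at this
    linarith
  obtain ⟨z, -, hz⟩ := isCompact_univ.exists_isMaxOn Set.univ_nonempty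
    (continuous_berkovich_eval (B := B) (f : B)).continuousOn
  refine ⟨z, le_antisymm (z.toFun_le_one hna f) ?_⟩
  have hub : z.toFun (f : B) ∈ upperBounds
      (Set.range fun w : BerkovichPoint B => w.toFun (f : B)) := by
    rintro x ⟨w, rfl⟩
    exact hz (Set.mem_univ w)
  have := (hU (f : B)).2 hub
  rwa [hnorm] at this

end Aux

/-- Let `B` be a uniform Banach algebra and `p` a minimal prime of the reduction ring `B̃`.
Then `red⁻¹(p) = ⋂_{f̃ ∉ p} P(|f|)` is a nonempty closed subset of `M(B)`; in particular
the image of the reduction map contains every minimal prime of `Spec B̃`. -/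
theorem stmt9 {B : Type*} [NormedCommRing B] [NormOneClass B] [CompleteSpace B]
    [CompactSpace (BerkovichPoint B)]
    (hna : IsNonarchimedean (norm : B → ℝ)) (hU : IsUniform B)
    (p : Ideal (Reduction B hna)) (hp : p.IsPrime)
    (hmin : p ∈ minimalPrimes (Reduction B hna)) :
    {z : BerkovichPoint B | redIdeal B hna z = p} =
        (⋂ f ∈ {f : unitBall B hna | reduce B hna f ∉ p},
          {z : BerkovichPoint B | z.toFun (f : B) = 1}) ∧
      ({z : BerkovichPoint B | redIdeal B hna z = p}).Nonempty ∧
      IsClosed {z : BerkovichPoint B | redIdeal B hna z = p} := by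
    classical
  -- key membership fact
  set S := {f : unitBall B hna | reduce B hna f ∉ p} with hS
  have hP : ∀ f ∈ S, ∃ z : BerkovichPoint B, z.toFun (f : B) = 1 := by
    intro f hf
    refine exists_toFun_eq_one hna hU f ?_
    intro hmem
    exact hf (by simpa [reduce, Ideal.Quotient.eq_zero_iff_mem.mpr hmem] using p.zero_mem)
  -- the set equality
  have hEq : {z : BerkovichPoint B | redIdeal B hna z = p} =
      (⋂ f ∈ S, {z : BerkovichPoint B | z.toFun (f : B) = 1}) := by
    ext z
    simp only [Set.mem_setOf_eq, Set.mem_iInter]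
    constructor
    · intro hz f hf
      have : reduce B hna f ∉ redIdeal B hna z := hz ▸ hf
      have hlt := (mem_redIdeal_iff hna z f).not.mp this
      exact le_antisymm (z.toFun_le_one hna f) (not_lt.mp hlt)
    · intro hz
      have hle : redIdeal B hna z ≤ p := by
        intro x hx
        obtain ⟨g, rfl⟩ := Ideal.Quotient.mk_surjective x
        by_contra hxp
        have hg1 : z.toFun (g : B) = 1 := hz g hxp
        have := (mem_redIdeal_iff hna z g).mp hx
        rw [hg1] at this
        exact lt_irrefl _ this
      exact le_antisymm hle (hmin.2 ⟨redIdeal_isPrime hna z, bot_le⟩ hle)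
  refine ⟨hEq, ?_, ?_⟩
  · -- nonemptiness via compactness and FIP
    rw [hEq]
    by_contra hempty
    rw [Set.not_nonempty_iff_eq_empty] at hempty
    have hclosed : ∀ i : S, IsClosed {z : BerkovichPoint B | z.toFun ((i : unitBall B hna) : B) = 1} :=
      fun i => isClosed_eq (continuous_berkovich_eval _) continuous_const
    have hempty' : (Set.univ : Set (BerkovichPoint B)) ∩
        ⋂ i : S, {z : BerkovichPoint B | z.toFun ((i : unitBall B hna) : B) = 1} = ∅ := by
      rw [Set.univ_inter, ← hempty, Set.biInter_eq_iInter]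
    obtain ⟨t, ht⟩ := isCompact_univ.elim_finite_subfamily_closed _ hclosed hempty'
    rw [Set.univ_inter] at ht
    set g : unitBall B hna := ∏ i ∈ t, (i : unitBall B hna) with hg
    have hgS : g ∈ S := by
      simp only [hS, Set.mem_setOf_eq, hg]
      rw [map_prod (reduce B hna)]
      rw [Ideal.IsPrime.prod_mem_iff]
      rintro ⟨i, hi, hip⟩
      exact i.2 hip
    obtain ⟨z, hzg⟩ := hP g hgS
    have hzprod : ∏ i ∈ t, z.toFun ((i : unitBall B hna) : B) = 1 := by
      have := map_prod (z.ballMonoidHom hna) (fun i : S => (i : unitBall B hna)) t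
      simpa [BerkovichPoint.ballMonoidHom, hg] using (this ▸ hzg)
    have hall := prod_eq_one_forall t (fun i : S => z.toFun ((i : unitBall B hna) : B))
      (fun i _ => z.nonneg' _) (fun i _ => z.toFun_le_one hna _) hzprod
    have hzmem : z ∈ ⋂ i ∈ t, {w : BerkovichPoint B | w.toFun ((i : unitBall B hna) : B) = 1} := by
      simp only [Set.mem_iInter, Set.mem_setOf_eq]
      exact hall
    rw [ht] at hzmem
    exact hzmem
  · rw [hEq]
    exact isClosed_biInter fun f _ =>
      isClosed_eq (continuous_berkovich_eval _) continuous_const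
end

section
/- Every uniform Banach algebra B admits a Shilov boundary: the collection of closed boundaries of M(B), ordered by inclusion, has a minimal element. (Every descending chain of closed boundaries has a lower bound given by its intersection, which is again a closed boundary by compactness; conclude by Zorn's lemma.) -/
/-- Every uniform Banach algebra admits a Shilov boundary: the collection of closed
boundaries of `M(B)`, ordered by inclusion, has a minimal element. -/
theorem stmt12 {B : Type*} [NormedCommRing B] [NormOneClass B] [CompleteSpace B]
    [CompactSpace (BerkovichPoint B)] (hU : IsUniform B) :
    ∃ Γ : Set (BerkovichPoint B), IsShilov B Γ := by
    classical
  set S : Set (Set (BerkovichPoint B)) := {Γ | IsClosed Γ ∧ IsBoundary B Γ} with hS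
  have hcont : ∀ b : B, Continuous fun z : BerkovichPoint B => z.toFun b := fun b =>
    (continuous_apply b).comp continuous_induced_dom
  have hne : ∀ Γ ∈ S, Γ.Nonempty := by
    intro Γ hΓ
    by_contra h
    rw [Set.not_nonempty_iff_eq_empty] at h
    have h1 := hΓ.2 1
    rw [h, Set.image_empty] at h1
    have h2 : ‖(1:B)‖ ≤ ‖(1:B)‖ - 1 := h1.2 (fun y hy => hy.elim)
    linarith
  have hattain : ∀ Γ ∈ S, ∀ b : B, ∃ z ∈ Γ, z.toFun b = ‖b‖ := by
    intro Γ hΓ b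
    obtain ⟨z, hz, hmax⟩ :=
      (hΓ.1.isCompact).exists_isMaxOn (hne Γ hΓ) ((hcont b).continuousOn)
    refine ⟨z, hz, le_antisymm (z.bounded' b) ?_⟩
    refine (hΓ.2 b).2 ?_
    rintro y ⟨w, hw, rfl⟩
    exact hmax hw
  have key : ∀ c ⊆ S, IsChain (· ⊆ ·) c → c.Nonempty → ∃ lb ∈ S, ∀ s ∈ c, lb ⊆ s := by
    intro c hcS hchain hcne
    refine ⟨⋂₀ c, ⟨isClosed_sInter fun Γ hΓ => (hcS hΓ).1, ?_⟩, fun s hs => Set.sInter_subset_of_mem hs⟩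
    intro b
    have hzex : ∃ z ∈ ⋂₀ c, z.toFun b = ‖b‖ := by
      haveI : Nonempty c := hcne.to_subtype
      set K : c → Set (BerkovichPoint B) :=
        fun Γ => (Γ : Set (BerkovichPoint B)) ∩ {z | z.toFun b = ‖b‖} with hK
      have hKcl : ∀ i, IsClosed (K i) := fun ⟨Γ, hΓ⟩ =>
        ((hcS hΓ).1).inter (isClosed_eq (hcont b) continuous_const)
      have hKn : ∀ i, (K i).Nonempty := by
        rintro ⟨Γ, hΓ⟩
        obtain ⟨z, hz, hzv⟩ := hattain Γ (hcS hΓ) b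
        exact ⟨z, hz, hzv⟩
      have hKd : Directed (· ⊇ ·) K := by
        rintro ⟨Γ₁, h₁⟩ ⟨Γ₂, h₂⟩
        rcases hchain.total h₁ h₂ with h | h
        · exact ⟨⟨Γ₁, h₁⟩, le_refl _, Set.inter_subset_inter_left _ h⟩
        · exact ⟨⟨Γ₂, h₂⟩, Set.inter_subset_inter_left _ h, le_refl _⟩
      obtain ⟨z, hz⟩ := IsCompact.nonempty_iInter_of_directed_nonempty_isCompact_isClosed
        K hKd hKn (fun i => (hKcl i).isCompact) hKcl
      simp only [Set.mem_iInter] at hz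
      refine ⟨z, fun Γ hΓ => (hz ⟨Γ, hΓ⟩).1, (hz hcne.to_subtype.some).2⟩
    obtain ⟨z, hz, hzv⟩ := hzex
    constructor
    · rintro y ⟨w, hw, rfl⟩
      exact w.bounded' b
    · intro x hx
      exact hzv ▸ hx ⟨z, hz, rfl⟩
  obtain ⟨m, _, hm⟩ := zorn_superset_nonempty S key Set.univ
    ⟨isClosed_univ, fun b => by rw [Set.image_univ]; exact hU b⟩
  exact ⟨m, hm.1.1, hm.1.2, fun Γ' hcl hbd hsub => hm.eq_of_subset ⟨hcl, hbd⟩ hsub⟩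
end

section
/- Let B be a uniform Banach algebra, f ∈ B with spectral norm 1, and σ : B → B{f^{-1}} the localization homomorphism (B{f^{-1}} = B{T}/(Tf−1) with its spectral seminorm). Then for every b ∈ B, the decreasing sequence ‖f^n b‖_{Sp,B} converges to ‖σ(b)‖_{Sp,B{f^{-1}}} as n → ∞. -/
/-- Let `B` be a uniform Banach algebra and `f ∈ B` of spectral norm `1`.  Then for every
`b ∈ B` the sequence `‖f^n · b‖` is decreasing and converges, as `n → ∞`, to the spectral
seminorm of the image of `b` in the analytic localization `B{f⁻¹}`, i.e. to
`sup_{z ∈ P(|f|)} |b(z)|`. -/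
theorem stmt15 {B : Type*} [NormedCommRing B] [NormOneClass B] [CompleteSpace B]
    [CompactSpace (BerkovichPoint B)] (hU : IsUniform B)
    (f : B) (hf : ‖f‖ = 1) (b : B) :
    Antitone (fun n : ℕ => ‖f ^ n * b‖) ∧
    Filter.Tendsto (fun n : ℕ => ‖f ^ n * b‖) Filter.atTop
      (nhds (sSup ((fun z : BerkovichPoint B => z.toFun b) ''
        {z : BerkovichPoint B | z.toFun f = 1}))) := by
  classical
  have contEval : ∀ c : B, Continuous (fun z : BerkovichPoint B => z.toFun c) :=
    fun c => (continuous_apply c).comp continuous_induced_dom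
  have hne : Nonempty (BerkovichPoint B) := by
    by_contra h
    rw [not_nonempty_iff] at h
    have h1 := (hU f).2
    rw [Set.range_eq_empty] at h1
    have h2 : ‖f‖ ≤ 0 := h1 (fun y hy => hy.elim)
    rw [hf] at h2; linarith
  have hf1 : ∀ z : BerkovichPoint B, z.toFun f ≤ 1 := fun z => hf ▸ z.bounded' f
  have hpow : ∀ (z : BerkovichPoint B) (n : ℕ), z.toFun (f ^ n) = (z.toFun f) ^ n := by
    intro z n
    induction n with
    | zero => simp [z.map_one']
    | succ n ih => rw [pow_succ, z.map_mul', ih, pow_succ]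
  have hg : ∀ (n : ℕ) (z : BerkovichPoint B),
      z.toFun (f ^ n * b) = (z.toFun f) ^ n * z.toFun b := by
    intro n z; rw [z.map_mul', hpow]
  have hganti : ∀ z : BerkovichPoint B, Antitone (fun n : ℕ => z.toFun (f ^ n * b)) := by
    intro z
    intro m n hmn
    simp only [hg]
    exact mul_le_mul_of_nonneg_right
      (pow_le_pow_of_le_one (z.nonneg' f) (hf1 z) hmn) (z.nonneg' b)
  have hanti : Antitone (fun n : ℕ => ‖f ^ n * b‖) := by
    intro m n hmn
    apply (hU (f ^ n * b)).2
    rintro x ⟨z, rfl⟩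
    exact (hganti z hmn).trans ((hU (f ^ m * b)).1 ⟨z, rfl⟩)
  -- P(|f|) is nonempty
  obtain ⟨z₀, -, hz₀⟩ := (isCompact_univ (X := BerkovichPoint B)).exists_isMaxOn
    Set.univ_nonempty ((contEval f).continuousOn)
  have hz₀P : z₀.toFun f = 1 := by
    refine le_antisymm (hf1 z₀) ?_
    have : ‖f‖ ≤ z₀.toFun f := (hU f).2 (by rintro x ⟨y, rfl⟩; exact hz₀ (Set.mem_univ y))
    rw [hf] at this; exact this
  set L := sSup ((fun z : BerkovichPoint B => z.toFun b) ''
    {z : BerkovichPoint B | z.toFun f = 1}) with hLdef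
  have hbdd : BddAbove ((fun z : BerkovichPoint B => z.toFun b) ''
      {z : BerkovichPoint B | z.toFun f = 1}) :=
    ⟨‖b‖, by rintro x ⟨z, -, rfl⟩; exact (hU b).1 ⟨z, rfl⟩⟩
  have hL0 : 0 ≤ L := le_trans (z₀.nonneg' b) (le_csSup hbdd ⟨z₀, hz₀P, rfl⟩)
  have hlow : ∀ n : ℕ, L ≤ ‖f ^ n * b‖ := by
    intro n
    refine csSup_le ⟨_, ⟨z₀, hz₀P, rfl⟩⟩ ?_
    rintro x ⟨z, hz, rfl⟩
    have h1 : z.toFun b = z.toFun (f ^ n * b) := by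
      rw [hg, Set.mem_setOf_eq.mp hz, one_pow, one_mul]
    show z.toFun b ≤ ‖f ^ n * b‖
    rw [h1]
    exact (hU (f ^ n * b)).1 ⟨z, rfl⟩
  have hupp : ∀ ε : ℝ, 0 < ε → ∃ N : ℕ, ‖f ^ N * b‖ ≤ L + ε := by
    intro ε hε
    set U : ℕ → Set (BerkovichPoint B) := fun n => {z | z.toFun (f ^ n * b) < L + ε}
      with hUdef
    have hUopen : ∀ n, IsOpen (U n) := fun n => isOpen_lt (contEval _) continuous_const
    have hcover : (Set.univ : Set (BerkovichPoint B)) ⊆ ⋃ n, U n := by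
      intro z _
      by_cases hzP : z.toFun f = 1
      · refine Set.mem_iUnion.2 ⟨0, ?_⟩
        show z.toFun (f ^ 0 * b) < L + ε
        rw [hg, pow_zero, one_mul]
        have : z.toFun b ≤ L := le_csSup hbdd ⟨z, hzP, rfl⟩
        linarith
      · have hlt : z.toFun f < 1 := lt_of_le_of_ne (hf1 z) hzP
        have htend0 : Filter.Tendsto (fun n : ℕ => (z.toFun f) ^ n * z.toFun b)
            Filter.atTop (nhds 0) := by
          simpa using
            (tendsto_pow_atTop_nhds_zero_of_lt_one (z.nonneg' f) hlt).mul_const (z.toFun b)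
        have hev := htend0.eventually (gt_mem_nhds (by linarith : (0:ℝ) < L + ε))
        obtain ⟨n, hn⟩ := hev.exists
        refine Set.mem_iUnion.2 ⟨n, ?_⟩
        show z.toFun (f ^ n * b) < L + ε
        rw [hg]; exact hn
    obtain ⟨t, ht⟩ := isCompact_univ.elim_finite_subcover U hUopen hcover
    refine ⟨t.sup id, ?_⟩
    rw [(hU (f ^ t.sup id * b)).csSup_eq (Set.range_nonempty _) |>.symm]
    apply csSup_le (Set.range_nonempty _)
    rintro x ⟨z, rfl⟩
    obtain ⟨n, hn, hzn⟩ := Set.mem_iUnion₂.1 (ht (Set.mem_univ z))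
    have hle : z.toFun (f ^ t.sup id * b) ≤ z.toFun (f ^ n * b) :=
      hganti z (Finset.le_sup (f := id) hn)
    exact le_of_lt (lt_of_le_of_lt hle hzn)
  have hbdd2 : BddBelow (Set.range fun n : ℕ => ‖f ^ n * b‖) :=
    ⟨L, by rintro x ⟨n, rfl⟩; exact hlow n⟩
  have htend := tendsto_atTop_ciInf hanti hbdd2
  have hiInf : (⨅ n : ℕ, ‖f ^ n * b‖) = L := by
    refine le_antisymm ?_ (le_ciInf hlow)
    refine le_of_forall_pos_le_add ?_
    intro ε hε
    obtain ⟨N, hN⟩ := hupp ε hε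
    exact (ciInf_le hbdd2 N).trans hN
  exact ⟨hanti, hiInf ▸ htend⟩
end

section
/- Let E be a vector space over a non-Archimedean field k and {‖·‖_i}_{i∈I} a family of ultrametric norms on E. Let E'_I = {v ∈ E : sup_i ‖v‖_i < ∞} with the norm ‖v‖_I = sup_i ‖v‖_i, and let ε_I be its completion. Suppose for each i, C_i ⊆ E_i (completion of E under ‖·‖_i) together with κ_i is a contraction of the image of ε_I in E_i (i.e., κ_i is a norm-nonincreasing linear map to C_i inducing an isomorphism on residue vector spaces). Then κ = ∏κ_i : ε_I → ⊕^⊥_{i∈I} C_i (the bounded product with sup norm) is injective and isometric. -/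
/-- Let `E` be a vector space over a non-Archimedean maximally complete field `k` with
`|k^×| = ℝ_{>0}`, and `{‖·‖_i}_{i ∈ ι}` a family of ultrametric norms on `E`.  Let `ε_I`
be the completion of `E'_I = {v : sup_i ‖v‖_i < ∞}` under the sup norm, with canonical
(contractive) maps `π_i : ε_I → E_i` to the completions, so that
`‖v‖ = sup_i ‖π_i v‖` (hypothesis `hnorm`).  Suppose for each `i` we are given a
contraction `(C_i, κ_i)` of the image of `ε_I` in `E_i`: a norm-nonincreasing linear
map `κ_i` inducing an isomorphism on residue (reduction) vector spaces — unfolded in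
`hκinj` (injectivity on reductions) and `hκsurj` (surjectivity on reductions).
Then `κ = ∏ κ_i : ε_I → ⊕^⊥ C_i` (the bounded product with the sup norm) is injective
and isometric. -/
theorem stmt19 {k : Type*} [NontriviallyNormedField k]
    (hk : IsNonarchimedean (norm : k → ℝ))
    (hval : ∀ r : ℝ, 0 < r → ∃ c : k, ‖c‖ = r)
    {ι : Type*} {ℰ : Type*} [NormedAddCommGroup ℰ] [NormedSpace k ℰ] [CompleteSpace ℰ]
    (hℰ : IsNonarchimedean (norm : ℰ → ℝ))
    (Ei : ι → Type*) [∀ i, NormedAddCommGroup (Ei i)] [∀ i, NormedSpace k (Ei i)]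
    [∀ i, CompleteSpace (Ei i)]
    (Ci : ι → Type*) [∀ i, NormedAddCommGroup (Ci i)] [∀ i, NormedSpace k (Ci i)]
    (π : ∀ i, ℰ →ₗ[k] Ei i)
    (hnorm : ∀ v : ℰ, IsLUB (Set.range fun i => ‖π i v‖) ‖v‖)
    (κ : ∀ i, Ei i →ₗ[k] Ci i)
    (hκcontr : ∀ (i) (x : Ei i), ‖κ i x‖ ≤ ‖x‖)
    (hκinj : ∀ (i) (v : ℰ), ‖π i v‖ ≤ 1 → ‖κ i (π i v)‖ < 1 → ‖π i v‖ < 1)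
    (hκsurj : ∀ (i) (c : Ci i), ‖c‖ ≤ 1 →
      ∃ v : ℰ, ‖π i v‖ ≤ 1 ∧ ‖κ i (π i v) - c‖ < 1) :
    Function.Injective (fun (v : ℰ) (i : ι) => κ i (π i v)) ∧
      ∀ v : ℰ, IsLUB (Set.range fun i => ‖κ i (π i v)‖) ‖v‖ := by
  have key : ∀ v : ℰ, IsLUB (Set.range fun i => ‖κ i (π i v)‖) ‖v‖ := by
    intro v
    constructor
    · rintro _ ⟨i, rfl⟩
      exact (hκcontr i (π i v)).trans ((hnorm v).1 ⟨i, rfl⟩)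
    · intro b hb
      refine (hnorm v).2 ?_
      rintro _ ⟨i, rfl⟩
      by_contra h
      push_neg at h
      have hb0 : 0 ≤ b := le_trans (norm_nonneg _) (hb ⟨i, rfl⟩)
      have hpos : 0 < ‖π i v‖ := lt_of_le_of_lt hb0 h
      obtain ⟨c, hc⟩ := hval (‖π i v‖)⁻¹ (by positivity)
      have h1 : ‖π i (c • v)‖ = 1 := by
        rw [map_smul, norm_smul, hc, inv_mul_cancel₀ hpos.ne']
      have h2 : ‖κ i (π i (c • v))‖ < 1 := by
        rw [map_smul, map_smul, norm_smul, hc]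
        calc (‖π i v‖)⁻¹ * ‖κ i (π i v)‖ ≤ (‖π i v‖)⁻¹ * b :=
              mul_le_mul_of_nonneg_left (hb ⟨i, rfl⟩) (by positivity)
          _ < (‖π i v‖)⁻¹ * ‖π i v‖ := by
              exact mul_lt_mul_of_pos_left h (by positivity)
          _ = 1 := inv_mul_cancel₀ hpos.ne'
      have := hκinj i (c • v) h1.le h2
      rw [h1] at this
      exact lt_irrefl 1 this
  refine ⟨?_, key⟩
  intro v w h
  have h0 : ∀ i, κ i (π i (v - w)) = 0 := by
    intro i
    have h' : κ i (π i v) = κ i (π i w) := congrFun h i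
    rw [map_sub, map_sub, h', sub_self]
  have hle : ‖v - w‖ ≤ 0 := (key (v - w)).2 (by rintro _ ⟨i, rfl⟩; simp only [h0 i, norm_zero, le_refl])
  have : v - w = 0 := by rwa [norm_le_zero_iff] at hle
  exact sub_eq_zero.mp this
end
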